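/- For every t ∈ ℕ, the random permutation π_t given by t steps of the overlapping cycles shuffle satisfies π_t⁻¹ =_d σ·π_t·σ⁻¹; that is, the pushforward of μ_t under the map g ↦ g⁻¹ equals the pushforward of μ_t under the map g ↦ σ·g·σ⁻¹. -/

import Mathlib

open scoped Classical

/-- One step of the overlapping cycles shuffle acting on positions `1,…,n`
    (`coin = true` means Heads). -/
def ocsStep (n m x : ℕ) (coin : Bool) : ℕ :=
  if x < m then x + 1
  else if x = m then (if coin then 1 else m + 1)
  else if x < n then (if coin then x else x + 1)
  else if coin then x else 1

/-- Position after `t` steps of the card initially at position `i`,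
    using coin sequence `c` (0-indexed: step `r+1` uses coin `c r`). -/
def ocsPos (n m : ℕ) (c : ℕ → Bool) (i : ℕ) : ℕ → ℕ
  | 0 => i
  | t + 1 => ocsStep n m (ocsPos n m c i t) (c t)
/-- Probability, with respect to the uniform distribution on the first `T`
    independent fair coins, of an event `P` on coin sequences. -/
noncomputable def prob (T : ℕ) (P : (ℕ → Bool) → Prop) : ℝ :=
  ((Finset.univ.filter
      (fun c : Fin T → Bool =>
        P (fun r => if h : r < T then c ⟨r, h⟩ else false))).card : ℝ) / 2 ^ T
/-- `μ_t(g)`: probability that after `t` steps of the overlapping cycles shuffle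
    the card starting in position `j` is in position `g(j)` for every `j`
    (positions `1,…,n`, encoded by `Fin n` via `j ↦ j+1`); this is the
    distribution of the product `g_t ⋯ g_1` of the `t` independent steps. -/
noncomputable def shuffleDist (n m t : ℕ) (g : Equiv.Perm (Fin n)) : ℝ :=
  prob t (fun c => ∀ j : Fin n, ocsPos n m c ((j : ℕ) + 1) t = ((g j : Fin n) : ℕ) + 1)

/-- Total variation distance between `μ_t` and the uniform distribution on `S_n`. -/
noncomputable def tvUniform (n m t : ℕ) : ℝ :=
  (1 / 2) * ∑ g : Equiv.Perm (Fin n), |shuffleDist n m t g - 1 / (Nat.factorial n)|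

/-! Each step `s_b` of the shuffle is conjugate to its inverse by the reflection `ρ` that
reverses the order of the positions `1,…,m` and of the positions `m+1,…,n`: `ρ s_b ρ = s_b⁻¹`.
Hence if the coins `c₁,…,c_t` move the cards by `g = s_{c_t} ⋯ s_{c₁}`, then the reversed
coins `c_t,…,c₁` move them by `s_{c₁} ⋯ s_{c_t} = ρ g⁻¹ ρ`. Reversing the coin sequence is a
bijection of `{0,1}^t`, so `g` and `ρ g⁻¹ ρ` have the same probability. -/

/-- `ρ`: the permutation `σ` of the theorem, acting on positions `1,…,n`. -/
def ocsReflect (n m x : ℕ) : ℕ := if x ≤ m then m + 1 - x else n + m + 1 - x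

lemma ocsReflect_ocsReflect {n m x : ℕ} (h1 : 1 ≤ x) (h2 : x ≤ n) :
    ocsReflect n m (ocsReflect n m x) = x := by
  unfold ocsReflect
  split_ifs <;> omega

lemma ocsStep_mem_Icc {n m x : ℕ} (hmn : m < n) (b : Bool) (hx : x ∈ Set.Icc 1 n) :
    ocsStep n m x b ∈ Set.Icc 1 n := by
  obtain ⟨h1, h2⟩ := hx
  unfold ocsStep
  rw [Set.mem_Icc]
  cases b <;> split_ifs <;> omega

lemma ocsStep_ocsReflect_ocsStep {n m x : ℕ} (hmn : m < n) (b : Bool) (hx : x ∈ Set.Icc 1 n) :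
    ocsStep n m (ocsReflect n m (ocsStep n m x b)) b = ocsReflect n m x := by
  obtain ⟨h1, h2⟩ := hx
  cases b <;>
  · simp only [ocsStep, ocsReflect, Bool.false_eq_true, if_true, if_false]
    split_ifs <;> omega

lemma ocsPos_mem_Icc {n m x : ℕ} (hmn : m < n) (c : ℕ → Bool) (t : ℕ)
    (hx : x ∈ Set.Icc 1 n) : ocsPos n m c x t ∈ Set.Icc 1 n := by
  induction t with
  | zero => exact hx
  | succ t ih => exact ocsStep_mem_Icc hmn (c t) ih

lemma ocsPos_succ' (n m : ℕ) (c : ℕ → Bool) (x t : ℕ) :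
    ocsPos n m c x (t + 1) = ocsPos n m (fun r => c (r + 1)) (ocsStep n m x (c 0)) t := by
  induction t with
  | zero => rfl
  | succ t ih => rw [ocsPos, ih, ocsPos]

lemma ocsPos_reverse {n m x : ℕ} (hmn : m < n) (hx : x ∈ Set.Icc 1 n) (t : ℕ)
    {c d : ℕ → Bool} (hdc : ∀ r < t, d r = c (t - 1 - r)) :
    ocsPos n m d (ocsReflect n m (ocsPos n m c x t)) t = ocsReflect n m x := by
  induction t generalizing d with
  | zero => rfl
  | succ t ih =>
    have hd0 : d 0 = c t := by simpa using hdc 0 (by omega)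
    rw [ocsPos_succ', hd0, ocsPos, ocsStep_ocsReflect_ocsStep hmn _ (ocsPos_mem_Icc hmn c t hx)]
    exact ih fun r hr => by simpa [Nat.sub_sub, Nat.add_comm] using hdc (r + 1) (by omega)

section Conjugation

variable {n m : ℕ} {σ : Equiv.Perm (Fin n)}

lemma mul_self_eq_one_of_ocsReflect
    (hσ : ∀ x : Fin n, (σ x : ℕ) + 1 = ocsReflect n m (x + 1)) : σ * σ = 1 := by
  ext x
  have h := hσ (σ x)
  rw [hσ x, ocsReflect_ocsReflect (Nat.le_add_left 1 x) x.isLt] at h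
  simp only [Equiv.Perm.mul_apply, Equiv.Perm.one_apply]
  omega

lemma ocsPos_conj_inv_of_reverse (hmn : m ≤ n - 1)
    (hσ : ∀ x : Fin n, (σ x : ℕ) + 1 = ocsReflect n m (x + 1)) {t : ℕ} {c d : ℕ → Bool}
    (hdc : ∀ r < t, d r = c (t - 1 - r)) {g : Equiv.Perm (Fin n)}
    (hg : ∀ j : Fin n, ocsPos n m c (j + 1) t = g j + 1) (j : Fin n) :
    ocsPos n m d (j + 1) t = (σ * g⁻¹ * σ) j + 1 := by
  have hmn' : m < n := by have := j.isLt; omega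
  set k := g⁻¹ (σ j)
  have hk : ocsPos n m c (k + 1) t = ocsReflect n m (j + 1) := by
    rw [hg, ← hσ]
    simp [k]
  calc ocsPos n m d (j + 1) t
      = ocsPos n m d (ocsReflect n m (ocsPos n m c (k + 1) t)) t := by
        rw [hk, ocsReflect_ocsReflect (by omega) (by omega)]
    _ = ocsReflect n m (k + 1) := ocsPos_reverse hmn' ⟨by omega, k.isLt⟩ t hdc
    _ = (σ * g⁻¹ * σ) j + 1 := (hσ k).symm

lemma shuffleDist_conj_inv (hmn : m ≤ n - 1)
    (hσ : ∀ x : Fin n, (σ x : ℕ) + 1 = ocsReflect n m (x + 1)) (t : ℕ)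
    (g : Equiv.Perm (Fin n)) :
    shuffleDist n m t (σ * g⁻¹ * σ) = shuffleDist n m t g := by
  let rev : (Fin t → Bool) → (Fin t → Bool) := (· ∘ Fin.rev)
  have rev_rev : ∀ c, rev (rev c) = c := fun c => by funext i; simp [rev]
  have hrev : ∀ (c : Fin t → Bool), ∀ r < t,
      (if h : r < t then rev c ⟨r, h⟩ else false) =
        (fun r => if h : r < t then c ⟨r, h⟩ else false) (t - 1 - r) := by
    intro c r hr
    simp only [rev, Function.comp_apply, dif_pos hr, dif_pos (show t - 1 - r < t by omega)]
    congr 1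
    ext
    simp only [Fin.val_rev]
    omega
  unfold shuffleDist prob
  congr 2
  refine Finset.card_nbij' rev rev ?_ ?_ (fun c _ => rev_rev c) (fun c _ => rev_rev c)
  all_goals
    intro c hc
    simp only [Finset.coe_filter, Finset.mem_univ, true_and, Set.mem_ofPred_eq] at hc ⊢
  · simpa [mul_assoc] using ocsPos_conj_inv_of_reverse hmn hσ (hrev c) hc
  · exact ocsPos_conj_inv_of_reverse hmn hσ (hrev c) hc

end Conjugation

theorem inverse_shuffle_distribution_general (n m : ℕ) (hmn : m ≤ n - 1)
    (σ : Equiv.Perm (Fin n))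
    (hσ : ∀ x : Fin n, ((σ x : Fin n) : ℕ) + 1 =
      if (x : ℕ) + 1 ≤ m then m + 1 - ((x : ℕ) + 1) else n + m + 1 - ((x : ℕ) + 1))
    (t : ℕ) :
    ∀ h : Equiv.Perm (Fin n),
      shuffleDist n m t h⁻¹ = shuffleDist n m t (σ⁻¹ * h * σ) := by
  intro h
  have hσ_inv : σ⁻¹ = σ := inv_eq_of_mul_eq_one_right (mul_self_eq_one_of_ocsReflect hσ)
  rw [hσ_inv, ← shuffleDist_conj_inv hmn hσ t h⁻¹, inv_inv]

/-- For every `t`, the random permutation `π_t` of `t` steps of the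
overlapping cycles shuffle satisfies `π_t⁻¹ =_d σ·π_t·σ⁻¹`: the pushforward of
`μ_t` under `g ↦ g⁻¹` equals its pushforward under `g ↦ σ·g·σ⁻¹`, where `σ` is
the permutation with `σ(j) = m+1−j` for `1 ≤ j ≤ m` and `σ(j) = n+m+1−j` for
`m+1 ≤ j ≤ n` (positions encoded by `Fin n` via `j ↦ j+1`). -/
theorem inverse_shuffle_distribution (n m : ℕ) (hm : 2 ≤ m) (hmn : m ≤ n - 1)
    (σ : Equiv.Perm (Fin n))
    (hσ : ∀ x : Fin n, ((σ x : Fin n) : ℕ) + 1 =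
      if (x : ℕ) + 1 ≤ m then m + 1 - ((x : ℕ) + 1) else n + m + 1 - ((x : ℕ) + 1))
    (t : ℕ) :
    ∀ h : Equiv.Perm (Fin n),
      shuffleDist n m t h⁻¹ = shuffleDist n m t (σ⁻¹ * h * σ) :=
  inverse_shuffle_distribution_general n m hmn σ hσ t
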